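/- If (M,𝔛) ⊨ ACA₀ and U is a generic ultrafilter on P_𝔛 (i.e., U meets every dense subset of P_𝔛 that is parameter-definable in the second-order structure (M,𝔛)), then U is complete and definable. -/

import Mathlib

namespace Paper

/-! ### Syntax of (second-order) arithmetic.

Terms of the language `L_A = {0, 1, +, ·, <}`, with number variables indexed by `ℕ`.
Formulas also allow atomic formulas `t ∈ X_k` (membership in a set variable) and
set quantifiers `allS`; first-order formulas are those avoiding both. -/

inductive PTerm where
  | var : ℕ → PTerm
  | zero : PTerm
  | one : PTerm
  | add : PTerm → PTerm → PTerm
  | mul : PTerm → PTerm → PTerm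

inductive Fml where
  | eq : PTerm → PTerm → Fml
  | lt : PTerm → PTerm → Fml
  | mem : PTerm → ℕ → Fml
  | not : Fml → Fml
  | imp : Fml → Fml → Fml
  | all : ℕ → Fml → Fml
  | allS : ℕ → Fml → Fml

def Fml.and (φ ψ : Fml) : Fml := .not (.imp φ (.not ψ))
def Fml.or (φ ψ : Fml) : Fml := .imp (.not φ) ψ
def Fml.iff (φ ψ : Fml) : Fml := (Fml.imp φ ψ).and (Fml.imp ψ φ)
def Fml.ex (x : ℕ) (φ : Fml) : Fml := .not (.all x (.not φ))
def Fml.exS (k : ℕ) (φ : Fml) : Fml := .not (.allS k (.not φ))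

/-- A structure for the language `{0, 1, +, ·, <}` on a carrier `M`
(bundled, so that several structures can live on the same carrier). -/
structure AStr (M : Type) where
  zero : M
  one : M
  add : M → M → M
  mul : M → M → M
  lt : M → M → Prop

/-- The standard model of arithmetic. -/
def natStr : AStr ℕ := ⟨0, 1, (· + ·), (· * ·), (· < ·)⟩

namespace PTerm

def vars : PTerm → Finset ℕ
  | var n => {n}
  | zero => ∅
  | one => ∅
  | add t u => t.vars ∪ u.vars
  | mul t u => t.vars ∪ u.vars

/-- Substitution of a term `r` for the variable `x` (used only with `r` closed or
with `vars r ⊆ {x}`, in which case it is capture-free). -/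
def subst (x : ℕ) (r : PTerm) : PTerm → PTerm
  | var n => if n = x then r else var n
  | zero => zero
  | one => one
  | add t u => add (subst x r t) (subst x r u)
  | mul t u => mul (subst x r t) (subst x r u)

def val {M : Type} (S : AStr M) (v : ℕ → M) : PTerm → M
  | var n => v n
  | zero => S.zero
  | one => S.one
  | add t u => S.add (t.val S v) (u.val S v)
  | mul t u => S.mul (t.val S v) (u.val S v)

end PTerm

namespace Fml

/-- Free number variables. -/
def freeN : Fml → Finset ℕ
  | eq t u => t.vars ∪ u.vars
  | lt t u => t.vars ∪ u.vars
  | mem t _ => t.vars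
  | not φ => φ.freeN
  | imp φ ψ => φ.freeN ∪ ψ.freeN
  | all x φ => φ.freeN.erase x
  | allS _ φ => φ.freeN

/-- Substitution of a term `r` for the (free) variable `x`. -/
def substN (x : ℕ) (r : PTerm) : Fml → Fml
  | eq t u => eq (PTerm.subst x r t) (PTerm.subst x r u)
  | lt t u => lt (PTerm.subst x r t) (PTerm.subst x r u)
  | mem t k => mem (PTerm.subst x r t) k
  | not φ => not (substN x r φ)
  | imp φ ψ => imp (substN x r φ) (substN x r ψ)
  | all y φ => if y = x then all y φ else all y (substN x r φ)
  | allS k φ => allS k (substN x r φ)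

/-- First-order formulas: no set variables, no set quantifiers. -/
def IsFO : Fml → Prop
  | eq _ _ => True
  | lt _ _ => True
  | mem _ _ => False
  | not φ => φ.IsFO
  | imp φ ψ => φ.IsFO ∧ ψ.IsFO
  | all _ φ => φ.IsFO
  | allS _ _ => False

/-- Arithmetical formulas: set variables allowed as parameters, but no set quantifiers. -/
def IsArith : Fml → Prop
  | eq _ _ => True
  | lt _ _ => True
  | mem _ _ => True
  | not φ => φ.IsArith
  | imp φ ψ => φ.IsArith ∧ ψ.IsArith
  | all _ φ => φ.IsArith
  | allS _ _ => False

end Fml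

/-! ### Satisfaction -/

/-- Satisfaction for a second-order structure `(M, 𝔛)`: number quantifiers range over `M`,
set quantifiers range over `𝔛`. -/
def Sat {M : Type} (S : AStr M) (𝔛 : Set (Set M)) : (ℕ → M) → (ℕ → Set M) → Fml → Prop
  | v, _, .eq t u => t.val S v = u.val S v
  | v, _, .lt t u => S.lt (t.val S v) (u.val S v)
  | v, w, .mem t k => t.val S v ∈ w k
  | v, w, .not φ => ¬ Sat S 𝔛 v w φ
  | v, w, .imp φ ψ => Sat S 𝔛 v w φ → Sat S 𝔛 v w ψ
  | v, w, .all x φ => ∀ a : M, Sat S 𝔛 (Function.update v x a) w φ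
  | v, w, .allS k φ => ∀ X ∈ 𝔛, Sat S 𝔛 v (Function.update w k X) φ

/-- First-order satisfaction. -/
def SatFO {M : Type} (S : AStr M) (v : ℕ → M) (φ : Fml) : Prop :=
  Sat S Set.univ v (fun _ => ∅) φ

/-- `M ⊨ T` for a first-order theory `T`. -/
def ModelsT {M : Type} (S : AStr M) (T : Set Fml) : Prop :=
  ∀ φ ∈ T, ∀ v, SatFO S v φ

/-- Semantic consequence (equivalently, by the completeness theorem, provability). -/
def Proves (T : Set Fml) (φ : Fml) : Prop :=
  ∀ (M : Type) (S : AStr M), ModelsT S T → ∀ v, SatFO S v φ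

/-- Consistency (equivalently, by the completeness theorem, having a model). -/
def ConsistentT (T : Set Fml) : Prop :=
  ∃ (M : Type) (S : AStr M), ModelsT S T

def IsFOSentence (φ : Fml) : Prop := φ.IsFO ∧ φ.freeN = ∅

/-- Completeness of a theory. -/
def CompleteT (T : Set Fml) : Prop :=
  ∀ φ, IsFOSentence φ → (Proves T φ ∨ Proves T φ.not)

/-! ### Peano arithmetic -/

def numeral : ℕ → PTerm
  | 0 => .zero
  | n + 1 => .add (numeral n) .one

def univClosure (φ : Fml) : Fml := (φ.freeN.sort (· ≤ ·)).foldr Fml.all φ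

/-- The induction axiom for `φ` in the variable `x` (before taking universal closure). -/
def indFml (φ : Fml) (x : ℕ) : Fml :=
  .imp ((φ.substN x .zero).and (.all x (.imp φ (φ.substN x (.add (.var x) .one)))))
    (.all x φ)

/-- The axioms of first-order Peano arithmetic `PA`. -/
def PAax : Set Fml :=
  {Fml.all 0 (.not (.eq (.add (.var 0) .one) .zero)),
   Fml.all 0 (.all 1 (.imp (.eq (.add (.var 0) .one) (.add (.var 1) .one))
     (.eq (.var 0) (.var 1)))),
   Fml.all 0 (.eq (.add (.var 0) .zero) (.var 0)),
   Fml.all 0 (.all 1 (.eq (.add (.var 0) (.add (.var 1) .one))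
     (.add (.add (.var 0) (.var 1)) .one))),
   Fml.all 0 (.eq (.mul (.var 0) .zero) .zero),
   Fml.all 0 (.all 1 (.eq (.mul (.var 0) (.add (.var 1) .one))
     (.add (.mul (.var 0) (.var 1)) (.var 0)))),
   Fml.all 0 (.all 1 (Fml.iff (.lt (.var 0) (.var 1))
     (Fml.ex 2 (.eq (.add (.var 0) (.add (.var 2) .one)) (.var 1)))))} ∪
  {ψ | ∃ φ x, Fml.IsFO φ ∧ ψ = univClosure (indFml φ x)}

/-! ### Gödel coding -/

/-- The Cantor pairing function (the canonical pairing `⟨·,·⟩`). -/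
def cpair (a b : ℕ) : ℕ := (a + b) * (a + b + 1) / 2 + a

def PTerm.code : PTerm → ℕ
  | .var n => cpair 0 n
  | .zero => cpair 1 0
  | .one => cpair 2 0
  | .add t u => cpair 3 (cpair t.code u.code)
  | .mul t u => cpair 4 (cpair t.code u.code)

def Fml.code : Fml → ℕ
  | .eq t u => cpair 5 (cpair t.code u.code)
  | .lt t u => cpair 6 (cpair t.code u.code)
  | .not φ => cpair 7 φ.code
  | .imp φ ψ => cpair 8 (cpair φ.code ψ.code)
  | .all x φ => cpair 9 (cpair x φ.code)
  | .mem t k => cpair 10 (cpair t.code k)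
  | .allS k φ => cpair 11 (cpair k φ.code)

/-- A theory identified with its set of Gödel codes. -/
def theoryCode (T : Set Fml) : Set ℕ := Fml.code '' T

/-! ### The arithmetical hierarchy (syntactic classes) -/

inductive IsDelta0 : Fml → Prop
  | eq (t u) : IsDelta0 (.eq t u)
  | lt (t u) : IsDelta0 (.lt t u)
  | mem (t k) : IsDelta0 (.mem t k)
  | not {φ} : IsDelta0 φ → IsDelta0 φ.not
  | imp {φ ψ} : IsDelta0 φ → IsDelta0 ψ → IsDelta0 (φ.imp ψ)
  | ball {φ} (x t) : x ∉ PTerm.vars t → IsDelta0 φ →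
      IsDelta0 (.all x (.imp (.lt (.var x) t) φ))

def IsSigma01 (φ : Fml) : Prop := ∃ x ψ, IsDelta0 ψ ∧ φ = Fml.ex x ψ

def IsPi01 (φ : Fml) : Prop := ∃ x ψ, IsDelta0 ψ ∧ φ = Fml.all x ψ

/-! ### Subsystems of second-order arithmetic, semantically -/

/-- The basic axioms (`PA⁻`, a discretely ordered commutative semiring). -/
def PAminusSem {M : Type} (S : AStr M) : Prop :=
  (∀ a b c : M, S.add a (S.add b c) = S.add (S.add a b) c) ∧
  (∀ a b : M, S.add a b = S.add b a) ∧
  (∀ a b c : M, S.mul a (S.mul b c) = S.mul (S.mul a b) c) ∧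
  (∀ a b : M, S.mul a b = S.mul b a) ∧
  (∀ a b c : M, S.mul a (S.add b c) = S.add (S.mul a b) (S.mul a c)) ∧
  (∀ a : M, S.add a S.zero = a) ∧
  (∀ a : M, S.mul a S.zero = S.zero) ∧
  (∀ a : M, S.mul a S.one = a) ∧
  (∀ a b c : M, S.lt a b → S.lt b c → S.lt a c) ∧
  (∀ a : M, ¬ S.lt a a) ∧
  (∀ a b : M, S.lt a b ∨ a = b ∨ S.lt b a) ∧
  (∀ a b c : M, S.lt a b → S.lt (S.add a c) (S.add b c)) ∧
  (∀ a b c : M, S.lt S.zero c → S.lt a b → S.lt (S.mul a c) (S.mul b c)) ∧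
  (∀ a b : M, S.lt a b → ∃ c : M, S.add a c = b) ∧
  S.lt S.zero S.one ∧
  (∀ a : M, S.lt S.zero a → a = S.one ∨ S.lt S.one a) ∧
  (∀ a : M, a = S.zero ∨ S.lt S.zero a)

/-- `(M,𝔛)` satisfies the induction axiom for `φ` in the variable `x`
(with arbitrary number and set parameters). -/
def SatInd {M : Type} (S : AStr M) (𝔛 : Set (Set M)) (φ : Fml) (x : ℕ) : Prop :=
  ∀ (v : ℕ → M) (w : ℕ → Set M), (∀ k, w k ∈ 𝔛) →
    (Sat S 𝔛 (Function.update v x S.zero) w φ ∧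
      ∀ a, Sat S 𝔛 (Function.update v x a) w φ →
        Sat S 𝔛 (Function.update v x (S.add a S.one)) w φ) →
    ∀ a, Sat S 𝔛 (Function.update v x a) w φ

/-- `(M,𝔛) ⊨ RCA₀`: basic axioms, `Σ⁰₁` induction and `Δ⁰₁` comprehension. -/
def SatRCA0 {M : Type} (S : AStr M) (𝔛 : Set (Set M)) : Prop :=
  PAminusSem S ∧
  (∀ φ x, IsSigma01 φ → SatInd S 𝔛 φ x) ∧
  (∀ φ ψ x, IsSigma01 φ → IsPi01 ψ →
    ∀ (v : ℕ → M) (w : ℕ → Set M), (∀ k, w k ∈ 𝔛) →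
      (∀ a, Sat S 𝔛 (Function.update v x a) w φ ↔ Sat S 𝔛 (Function.update v x a) w ψ) →
      {a : M | Sat S 𝔛 (Function.update v x a) w φ} ∈ 𝔛)

/-- `(M,𝔛) ⊨ ACA₀`: basic axioms, the induction axiom and arithmetical comprehension. -/
def SatACA0 {M : Type} (S : AStr M) (𝔛 : Set (Set M)) : Prop :=
  PAminusSem S ∧
  (∀ X ∈ 𝔛, S.zero ∈ X → (∀ a, a ∈ X → S.add a S.one ∈ X) → ∀ a, a ∈ X) ∧
  (∀ φ x, Fml.IsArith φ → ∀ (v : ℕ → M) (w : ℕ → Set M), (∀ k, w k ∈ 𝔛) →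
    {a : M | Sat S 𝔛 (Function.update v x a) w φ} ∈ 𝔛)

/-! ### Arithmetization inside a model

All notions below unfold the standard (`Δ₀`/`Σ₁`) arithmetized definitions at the
meta-level, using the operations of a structure `S : AStr M`.  On models of `IΣ₁`
they agree with satisfaction of the corresponding arithmetic formulas. -/

namespace AStr

variable {M : Type} (S : AStr M)

/-- Interpretation of numerals. -/
def num : ℕ → M
  | 0 => S.zero
  | n + 1 => S.add (num n) S.one

def le (a b : M) : Prop := S.lt a b ∨ a = b

def two : M := S.add S.one S.one

/-- `p = ⟨a,b⟩` for the Cantor pairing function: `2p = (a+b)(a+b+1) + 2a`. -/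
def PairRel (p a b : M) : Prop :=
  S.mul S.two p = S.add (S.mul (S.add a b) (S.add (S.add a b) S.one)) (S.mul S.two a)

/-- `r = a mod m`. -/
def ModRel (a m r : M) : Prop := S.lt r m ∧ ∃ q, a = S.add (S.mul q m) r

/-- Gödel's β-function: `x = β(c, i)` where `c = ⟨a,b⟩` and `x = a mod (1 + (i+1)b)`. -/
def BetaRel (c i x : M) : Prop :=
  ∃ a b, S.PairRel c a b ∧ S.ModRel a (S.add S.one (S.mul (S.add i S.one) b)) x

/-- `s` codes a sequence of length `l` (as `s = ⟨c, l⟩`). -/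
def SeqLen (s l : M) : Prop := ∃ c, S.PairRel s c l

/-- The `i`-th entry of the sequence coded by `s` is `x`. -/
def SeqAt (s i x : M) : Prop := ∃ c l, S.PairRel s c l ∧ S.lt i l ∧ S.BetaRel c i x

/-- The fixed `Δ₀` coding formula `x ∈ y` for (bounded) sets:
`y = ⟨a,b⟩` and `a mod (1 + (x+1)b) = 1` with modulus `> 1`, and `x < y`. -/
def MemRel (x y : M) : Prop :=
  S.lt x y ∧ ∃ a b, S.PairRel y a b ∧
    S.lt S.one (S.add S.one (S.mul (S.add x S.one) b)) ∧
    S.ModRel a (S.add S.one (S.mul (S.add x S.one) b)) S.one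

/-- Tagged pairs, used for codes of syntax: `x = ⟨tag, payload⟩`. -/
def Node (x tag payload : M) : Prop := S.PairRel x tag payload

/-- `x` is the code of the variable `v`. -/
def VarC (v x : M) : Prop := S.Node x (S.num 0) v

def AddC (t u y : M) : Prop := ∃ p, S.PairRel p t u ∧ S.Node y (S.num 3) p
def MulC (t u y : M) : Prop := ∃ p, S.PairRel p t u ∧ S.Node y (S.num 4) p
def EqC (t u y : M) : Prop := ∃ p, S.PairRel p t u ∧ S.Node y (S.num 5) p
def LtC (t u y : M) : Prop := ∃ p, S.PairRel p t u ∧ S.Node y (S.num 6) p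
def NotC (x y : M) : Prop := S.Node y (S.num 7) x
def ImpC (x y z : M) : Prop := ∃ p, S.PairRel p x y ∧ S.Node z (S.num 8) p
def AllC (v x y : M) : Prop := ∃ p, S.PairRel p v x ∧ S.Node y (S.num 9) p

/-- `s` codes a construction sequence for terms. -/
def IsTermConSeq (s : M) : Prop :=
  ∀ i x, S.SeqAt s i x →
    (∃ v, S.VarC v x) ∨ S.Node x (S.num 1) (S.num 0) ∨ S.Node x (S.num 2) (S.num 0) ∨
    (∃ j k y z, S.lt j i ∧ S.lt k i ∧ S.SeqAt s j y ∧ S.SeqAt s k z ∧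
      (S.AddC y z x ∨ S.MulC y z x))

/-- `x` is a term code (in the sense of `M`, possibly nonstandard). -/
def TermCodeM (x : M) : Prop := ∃ s i, S.IsTermConSeq s ∧ S.SeqAt s i x

/-- `s` codes a construction sequence for (first-order) formulas. -/
def IsFmlConSeq (s : M) : Prop :=
  ∀ i x, S.SeqAt s i x →
    (∃ t u, S.TermCodeM t ∧ S.TermCodeM u ∧ (S.EqC t u x ∨ S.LtC t u x)) ∨
    (∃ j y, S.lt j i ∧ S.SeqAt s j y ∧ S.NotC y x) ∨
    (∃ j k y z, S.lt j i ∧ S.lt k i ∧ S.SeqAt s j y ∧ S.SeqAt s k z ∧ S.ImpC y z x) ∨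
    (∃ j v y, S.lt j i ∧ S.SeqAt s j y ∧ S.AllC v y x)

/-- `x` is a formula code (in the sense of `M`, possibly nonstandard). -/
def FmlCodeM (x : M) : Prop := ∃ s i, S.IsFmlConSeq s ∧ S.SeqAt s i x

/-- Construction sequences of pairs (term code, occurrence flag for the variable `v`). -/
def IsOccConSeq (v s : M) : Prop :=
  ∀ i p, S.SeqAt s i p → ∃ x f, S.PairRel p x f ∧
    ((S.VarC v x ∧ f = S.num 1) ∨
     (∃ u, S.VarC u x ∧ u ≠ v ∧ f = S.num 0) ∨
     ((S.Node x (S.num 1) (S.num 0) ∨ S.Node x (S.num 2) (S.num 0)) ∧ f = S.num 0) ∨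
     (∃ j k y z g h pj pk, S.lt j i ∧ S.lt k i ∧ S.SeqAt s j pj ∧ S.SeqAt s k pk ∧
       S.PairRel pj y g ∧ S.PairRel pk z h ∧ (S.AddC y z x ∨ S.MulC y z x) ∧
       ((f = S.num 1 ∧ (g = S.num 1 ∨ h = S.num 1)) ∨
        (f = S.num 0 ∧ g = S.num 0 ∧ h = S.num 0))))

/-- `f = 1` iff the variable `v` occurs in the term coded by `t` (`f ∈ {0,1}`). -/
def OccT (v t f : M) : Prop :=
  ∃ s i p, S.IsOccConSeq v s ∧ S.SeqAt s i p ∧ S.PairRel p t f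

/-- Construction sequences of pairs (formula code, freeness flag for the variable `v`). -/
def IsFreeConSeq (v s : M) : Prop :=
  ∀ i p, S.SeqAt s i p → ∃ x f, S.PairRel p x f ∧
    ((∃ t u, (S.EqC t u x ∨ S.LtC t u x) ∧
       ((f = S.num 1 ∧ (S.OccT v t (S.num 1) ∨ S.OccT v u (S.num 1))) ∨
        (f = S.num 0 ∧ S.OccT v t (S.num 0) ∧ S.OccT v u (S.num 0)))) ∨
     (∃ j y g pj, S.lt j i ∧ S.SeqAt s j pj ∧ S.PairRel pj y g ∧ S.NotC y x ∧ f = g) ∨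
     (∃ j k y z g h pj pk, S.lt j i ∧ S.lt k i ∧ S.SeqAt s j pj ∧ S.SeqAt s k pk ∧
       S.PairRel pj y g ∧ S.PairRel pk z h ∧ S.ImpC y z x ∧
       ((f = S.num 1 ∧ (g = S.num 1 ∨ h = S.num 1)) ∨
        (f = S.num 0 ∧ g = S.num 0 ∧ h = S.num 0))) ∨
     (∃ j w y g pj, S.lt j i ∧ S.SeqAt s j pj ∧ S.PairRel pj y g ∧ S.AllC w y x ∧
       ((w = v ∧ f = S.num 0) ∨ (w ≠ v ∧ f = g))))

/-- `f = 1` iff the variable `v` is free in the formula coded by `φ`. -/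
def FreeF (v φ f : M) : Prop :=
  ∃ s i p, S.IsFreeConSeq v s ∧ S.SeqAt s i p ∧ S.PairRel p φ f

/-- Construction sequences of pairs (term code, result of substituting `t` for `v`). -/
def IsSubTConSeq (v t s : M) : Prop :=
  ∀ i p, S.SeqAt s i p → ∃ x x', S.PairRel p x x' ∧
    ((S.VarC v x ∧ x' = t) ∨
     (∃ u, S.VarC u x ∧ u ≠ v ∧ x' = x) ∨
     ((S.Node x (S.num 1) (S.num 0) ∨ S.Node x (S.num 2) (S.num 0)) ∧ x' = x) ∨
     (∃ j k y z y' z' pj pk, S.lt j i ∧ S.lt k i ∧ S.SeqAt s j pj ∧ S.SeqAt s k pk ∧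
       S.PairRel pj y y' ∧ S.PairRel pk z z' ∧
       ((S.AddC y z x ∧ S.AddC y' z' x') ∨ (S.MulC y z x ∧ S.MulC y' z' x'))))

/-- Substitution of the term (code) `t` for the variable `v` in terms: `x' = x[t/v]`. -/
def SubT (v t x x' : M) : Prop :=
  ∃ s i p, S.IsSubTConSeq v t s ∧ S.SeqAt s i p ∧ S.PairRel p x x'

/-- Construction sequences for capture-free substitution in formulas. -/
def IsSubFConSeq (v t s : M) : Prop :=
  ∀ i p, S.SeqAt s i p → ∃ x x', S.PairRel p x x' ∧
    ((∃ a b a' b', S.SubT v t a a' ∧ S.SubT v t b b' ∧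
       ((S.EqC a b x ∧ S.EqC a' b' x') ∨ (S.LtC a b x ∧ S.LtC a' b' x'))) ∨
     (∃ j y y' pj, S.lt j i ∧ S.SeqAt s j pj ∧ S.PairRel pj y y' ∧
       S.NotC y x ∧ S.NotC y' x') ∨
     (∃ j k y z y' z' pj pk, S.lt j i ∧ S.lt k i ∧ S.SeqAt s j pj ∧ S.SeqAt s k pk ∧
       S.PairRel pj y y' ∧ S.PairRel pk z z' ∧ S.ImpC y z x ∧ S.ImpC y' z' x') ∨
     (∃ w y, S.AllC w y x ∧
       ((w = v ∧ x' = x) ∨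
        (w ≠ v ∧ (S.OccT w t (S.num 0) ∨ S.FreeF v y (S.num 0)) ∧
          ∃ j y' pj, S.lt j i ∧ S.SeqAt s j pj ∧ S.PairRel pj y y' ∧ S.AllC w y' x'))))

/-- Capture-free substitution in formulas: `x' = x[t/v]`, with `t` substitutable for `v`. -/
def SubF (v t x x' : M) : Prop :=
  ∃ s i p, S.IsSubFConSeq v t s ∧ S.SeqAt s i p ∧ S.PairRel p x x'

/-- `x` is (the code of) a generalization `∀v₁ ⋯ ∀vₖ y` of `y`. -/
def GenOf (y x : M) : Prop :=
  ∃ s i, S.SeqAt s (S.num 0) y ∧ S.SeqAt s i x ∧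
    ∀ j z z', S.SeqAt s j z → S.SeqAt s (S.add j S.one) z' → S.le (S.add j S.one) i →
      ∃ v, S.AllC v z z'

/-- Codes of instances of the logical axiom schemes (a Hilbert-style calculus with
modus ponens as the only rule; axioms are taken together with their generalizations). -/
def LogAxCore (x : M) : Prop :=
  -- A1 : a → (b → a)
  (∃ a b y, S.FmlCodeM a ∧ S.FmlCodeM b ∧ S.ImpC b a y ∧ S.ImpC a y x) ∨
  -- A2 : (a → (b → c)) → ((a → b) → (a → c))
  (∃ a b c bc abc ab ac r, S.FmlCodeM a ∧ S.FmlCodeM b ∧ S.FmlCodeM c ∧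
    S.ImpC b c bc ∧ S.ImpC a bc abc ∧ S.ImpC a b ab ∧ S.ImpC a c ac ∧
    S.ImpC ab ac r ∧ S.ImpC abc r x) ∨
  -- A3 : (¬b → ¬a) → (a → b)
  (∃ a b na nb l r, S.FmlCodeM a ∧ S.FmlCodeM b ∧ S.NotC a na ∧ S.NotC b nb ∧
    S.ImpC nb na l ∧ S.ImpC a b r ∧ S.ImpC l r x) ∨
  -- A4 : ∀v a → a[t/v]
  (∃ v t a a' al, S.TermCodeM t ∧ S.FmlCodeM a ∧ S.AllC v a al ∧ S.SubF v t a a' ∧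
    S.ImpC al a' x) ∨
  -- A5 : ∀v (a → b) → (∀v a → ∀v b)
  (∃ v a b ab alab ala alb r, S.FmlCodeM a ∧ S.FmlCodeM b ∧ S.ImpC a b ab ∧
    S.AllC v ab alab ∧ S.AllC v a ala ∧ S.AllC v b alb ∧ S.ImpC ala alb r ∧
    S.ImpC alab r x) ∨
  -- A6 : a → ∀v a, for v not free in a
  (∃ v a ala, S.FmlCodeM a ∧ S.FreeF v a (S.num 0) ∧ S.AllC v a ala ∧ S.ImpC a ala x) ∨
  -- E1 : t = t
  (∃ t, S.TermCodeM t ∧ S.EqC t t x) ∨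
  -- E2 : u = w → w = u (variables)
  (∃ u w vu vw e1 e2, S.VarC u vu ∧ S.VarC w vw ∧ S.EqC vu vw e1 ∧ S.EqC vw vu e2 ∧
    S.ImpC e1 e2 x) ∨
  -- E3 : u = w → (w = z → u = z) (variables)
  (∃ u w z vu vw vz e1 e2 e3 r, S.VarC u vu ∧ S.VarC w vw ∧ S.VarC z vz ∧
    S.EqC vu vw e1 ∧ S.EqC vw vz e2 ∧ S.EqC vu vz e3 ∧ S.ImpC e2 e3 r ∧ S.ImpC e1 r x) ∨
  -- E4 : congruence of +, ·, < with respect to = (variables)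
  (∃ u1 w1 u2 w2 a1 b1 a2 b2 e1 e2 s1 s2 es r,
    S.VarC u1 a1 ∧ S.VarC w1 b1 ∧ S.VarC u2 a2 ∧ S.VarC w2 b2 ∧
    S.EqC a1 b1 e1 ∧ S.EqC a2 b2 e2 ∧
    ((S.AddC a1 a2 s1 ∧ S.AddC b1 b2 s2 ∧ S.EqC s1 s2 es) ∨
     (S.MulC a1 a2 s1 ∧ S.MulC b1 b2 s2 ∧ S.EqC s1 s2 es) ∨
     (S.LtC a1 a2 s1 ∧ S.LtC b1 b2 s2 ∧ S.ImpC s1 s2 es)) ∧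
    S.ImpC e2 es r ∧ S.ImpC e1 r x) ∨
  -- E5 : congruence of = (variables)
  (∃ u1 w1 u2 w2 a1 b1 a2 b2 e1 e2 d1 d2 inner r,
    S.VarC u1 a1 ∧ S.VarC w1 b1 ∧ S.VarC u2 a2 ∧ S.VarC w2 b2 ∧
    S.EqC a1 b1 e1 ∧ S.EqC a2 b2 e2 ∧ S.EqC a1 a2 d1 ∧ S.EqC b1 b2 d2 ∧
    S.ImpC d1 d2 inner ∧ S.ImpC e2 inner r ∧ S.ImpC e1 r x)

/-- Logical axioms: generalizations of instances of the axiom schemes. -/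
def LogAx (x : M) : Prop := ∃ y, S.LogAxCore y ∧ S.GenOf y x

/-- `s` codes a proof of `φ` from the set `Γ ⊆ M` of (codes of) sentences:
every entry is a logical axiom, a member of `Γ`, or follows by modus ponens. -/
def ProofFrom (Γ : Set M) (s φ : M) : Prop :=
  (∃ i, S.SeqAt s i φ) ∧
  ∀ i x, S.SeqAt s i x →
    S.LogAx x ∨ x ∈ Γ ∨
    (∃ j k y z, S.lt j i ∧ S.lt k i ∧ S.SeqAt s j y ∧ S.SeqAt s k z ∧ S.ImpC y x z)

/-- Provability (in the sense of `M`) from the axiom set `Γ ⊆ M`. -/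
def ProvFrom (Γ : Set M) (φ : M) : Prop := ∃ s, S.ProofFrom Γ s φ

/-- `M ⊨ Con_Γ` : there is no (possibly nonstandard) proof of a contradiction from `Γ`. -/
def ConOf (Γ : Set M) : Prop :=
  ¬ ∃ φ nφ, S.NotC φ nφ ∧ S.ProvFrom Γ φ ∧ S.ProvFrom Γ nφ

/-- `M ⊨ Con_T` for a (standard) theory `T`: `M` thinks every finite subtheory
of `T` is consistent. -/
def SatConTheory (T : Set Fml) : Prop :=
  ∀ F : Finset Fml, ↑F ⊆ T → S.ConOf {x : M | ∃ φ ∈ F, x = S.num (Fml.code φ)}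

/-! ### Coded sets, standard systems, filters on `P_𝔛` -/

/-- `A` is unbounded in `M`. -/
def Unb (A : Set M) : Prop := ∀ b, ∃ a ∈ A, S.lt b a

/-- `P_𝔛`: the collection of unbounded sets in `𝔛` (a partial order under `⊆`). -/
def PX (𝔛 : Set (Set M)) : Set (Set M) := {A | A ∈ 𝔛 ∧ S.Unb A}

/-- The `a`-th slice `(A)_a = {b | ⟨a,b⟩ ∈ A}`. -/
def SliceAt (A : Set M) (a : M) : Set M := {b | ∃ p, S.PairRel p a b ∧ p ∈ A}

/-- A function `M → M` is coded in `𝔛` if its graph (via the canonical pairing)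
belongs to `𝔛`. -/
def CodedFun (𝔛 : Set (Set M)) (f : M → M) : Prop :=
  ∃ G ∈ 𝔛, ∀ a b, f a = b ↔ b ∈ S.SliceAt G a

/-- A family `F` of sets is definable (over `(M,𝔛)`) if `{a | (A)_a ∈ F} ∈ 𝔛`
for every `A ∈ 𝔛`. -/
def DefinableFam (𝔛 F : Set (Set M)) : Prop :=
  ∀ A ∈ 𝔛, {a : M | S.SliceAt A a ∈ F} ∈ 𝔛

/-- `F` is a complete family: every function coded in `𝔛` with bounded range is
constant on some member of `F`. -/
def CompleteOn (𝔛 F : Set (Set M)) : Prop :=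
  ∀ f : M → M, S.CodedFun 𝔛 f → (∃ b, ∀ a, S.lt (f a) b) →
    ∃ A ∈ F, ∀ x ∈ A, ∀ y ∈ A, f x = f y

/-- The standard system `SSy(M)`: standard parts of the `M`-coded sets. -/
def SSy : Set (Set ℕ) := {A | ∃ c : M, ∀ n : ℕ, (n ∈ A ↔ S.MemRel (S.num n) c)}

/-- `M` is nonstandard. -/
def Nonstd : Prop := ∃ a : M, ∀ n : ℕ, a ≠ S.num n

/-- `M` is recursively saturated: every recursive type (in the variable `0`, with
finitely many parameters assigned to the variables `1, …, k`) that is finitely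
realized in `M` is realized in `M`. -/
def RecSat : Prop :=
  ∀ (p : Set Fml) (k : ℕ) (par : ℕ → M),
    (∀ φ ∈ p, Fml.IsFO φ ∧ φ.freeN ⊆ Finset.range (k + 1)) →
    ComputablePred (fun n => ∃ φ ∈ p, Fml.code φ = n) →
    (∀ F : Finset Fml, ↑F ⊆ p →
      ∃ a : M, ∀ φ ∈ F, SatFO S (fun i => if i = 0 then a else par i) φ) →
    ∃ a : M, ∀ φ ∈ p, SatFO S (fun i => if i = 0 then a else par i) φ

/-- `c` is the least code of the (bounded) set `A`. -/
def IsLeastCode (A : Set M) (c : M) : Prop :=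
  (∀ x, S.MemRel x c ↔ x ∈ A) ∧ ∀ c', (∀ x, S.MemRel x c' ↔ x ∈ A) → S.le c c'

/-- `A* = {⟨A ∩ I_{<a}⟩ | a ∈ M}`, the set of least codes of initial segments of `A`. -/
def star (A : Set M) : Set M :=
  {c | ∃ a, S.IsLeastCode (A ∩ {b | S.lt b a}) c}

end AStr

/-! ### Filters and partial orders of sets -/

/-- A filter on a partial order `P` of sets, ordered by inclusion: a proper, nonempty,
upward closed, downward directed subset of `P`. -/
def IsFilterOn {α : Type} (P F : Set (Set α)) : Prop :=
  F ⊆ P ∧ F.Nonempty ∧ F ≠ P ∧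
  (∀ A ∈ F, ∀ B ∈ P, A ⊆ B → B ∈ F) ∧
  (∀ A ∈ F, ∀ B ∈ F, ∃ C ∈ F, C ⊆ A ∧ C ⊆ B)

/-- An ultrafilter on a partial order of sets: a maximal filter. -/
def IsUltraOn {α : Type} (P U : Set (Set α)) : Prop :=
  IsFilterOn P U ∧ ∀ F, IsFilterOn P F → U ⊆ F → F = U

/-- A principal filter on a partial order of sets. -/
def IsPrincipalOn {α : Type} (P U : Set (Set α)) : Prop :=
  ∃ A ∈ P, U = {B | B ∈ P ∧ A ⊆ B}

/-- The countable chain condition for a partial order `P` of sets (ordered by `⊆`):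
every uncountable subset contains two distinct compatible elements. -/
def CCCOn {α : Type} (P : Set (Set α)) : Prop :=
  ∀ A : Set (Set α), A ⊆ P → ¬A.Countable →
    ∃ X ∈ A, ∃ Y ∈ A, X ≠ Y ∧ ∃ Z ∈ P, Z ⊆ X ∧ Z ⊆ Y

/-- `𝔛` is a Boolean algebra of sets. -/
def IsBoolAlg {α : Type} (𝔛 : Set (Set α)) : Prop :=
  Set.univ ∈ 𝔛 ∧ ∅ ∈ 𝔛 ∧
  (∀ A ∈ 𝔛, ∀ B ∈ 𝔛, A ∪ B ∈ 𝔛) ∧ (∀ A ∈ 𝔛, ∀ B ∈ 𝔛, A ∩ B ∈ 𝔛) ∧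
  (∀ A ∈ 𝔛, Aᶜ ∈ 𝔛)

/-- A filter on the Boolean algebra `𝔛`. -/
def IsBAFilter {α : Type} (𝔛 F : Set (Set α)) : Prop :=
  F ⊆ 𝔛 ∧ F.Nonempty ∧ ∅ ∉ F ∧
  (∀ A ∈ F, ∀ B ∈ 𝔛, A ⊆ B → B ∈ F) ∧
  (∀ A ∈ F, ∀ B ∈ F, A ∩ B ∈ F)

/-- An ultrafilter on the Boolean algebra `𝔛`: a maximal filter. -/
def IsBAUltra {α : Type} (𝔛 F : Set (Set α)) : Prop :=
  IsBAFilter 𝔛 F ∧ ∀ G, IsBAFilter 𝔛 G → F ⊆ G → G = F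

/-! ### Scott sets -/

/-- Oracle partial recursive functions: partial recursive in the oracle `O`. -/
inductive RecursiveIn (O : ℕ →. ℕ) : (ℕ →. ℕ) → Prop
  | oracle : RecursiveIn O O
  | zero : RecursiveIn O (pure 0)
  | succ : RecursiveIn O Nat.succ
  | left : RecursiveIn O ↑fun n : ℕ => n.unpair.1
  | right : RecursiveIn O ↑fun n : ℕ => n.unpair.2
  | pair {f g} : RecursiveIn O f → RecursiveIn O g →
      RecursiveIn O fun n => Nat.pair <$> f n <*> g n
  | comp {f g} : RecursiveIn O f → RecursiveIn O g →
      RecursiveIn O fun n => g n >>= f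
  | prec {f g} : RecursiveIn O f → RecursiveIn O g →
      RecursiveIn O (Nat.unpaired fun a n =>
        n.rec (f a) fun y IH => do let i ← IH; g (Nat.pair a (Nat.pair y i)))
  | rfind {f} : RecursiveIn O f →
      RecursiveIn O fun a => Nat.rfind fun n => (fun m => m = 0) <$> f (Nat.pair a n)

/-- The characteristic function of a set of natural numbers. -/
noncomputable def chi (A : Set ℕ) : ℕ →. ℕ :=
  fun n => Part.some (@ite _ (n ∈ A) (Classical.propDecidable _) 1 0)

/-- Turing reducibility: `B ≤_T A`. -/
def TuringLe (B A : Set ℕ) : Prop := RecursiveIn (chi A) (chi B)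

/-- A set of naturals coding a binary tree (codes of finite binary strings,
closed under initial segments). -/
def IsTreeCode (T : Set ℕ) : Prop :=
  (∀ n ∈ T, ∃ l : List Bool, Encodable.encode l = n) ∧
  (∀ l₁ l₂ : List Bool, l₁ <+: l₂ → Encodable.encode l₂ ∈ T → Encodable.encode l₁ ∈ T)

/-- `B` (as the characteristic function of a branch) is an infinite branch of the
binary tree coded by `T`. -/
def IsBranchThrough (B T : Set ℕ) : Prop :=
  ∀ n : ℕ, ∃ l : List Bool, l.length = n ∧
    (∀ i : Fin l.length, (l.get i = true ↔ (i : ℕ) ∈ B)) ∧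
    Encodable.encode l ∈ T

/-- A Scott set: a nonempty Boolean algebra of subsets of `ω` closed under relative
recursion and containing an infinite branch of every infinite binary tree coded in it. -/
def IsScottSet (𝔛 : Set (Set ℕ)) : Prop :=
  𝔛.Nonempty ∧
  (∀ A ∈ 𝔛, ∀ B ∈ 𝔛, A ∪ B ∈ 𝔛) ∧
  (∀ A ∈ 𝔛, Aᶜ ∈ 𝔛) ∧
  (∀ A ∈ 𝔛, ∀ B : Set ℕ, TuringLe B A → B ∈ 𝔛) ∧
  (∀ T ∈ 𝔛, IsTreeCode T → T.Infinite → ∃ B ∈ 𝔛, IsBranchThrough B T)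

/-- The sets represented in the theory `T`. -/
def repSet (T : Set Fml) : Set (Set ℕ) :=
  {A | ∃ φ : Fml, Fml.IsFO φ ∧ φ.freeN ⊆ {0} ∧
    ∀ n : ℕ, (n ∈ A → Proves T (φ.substN 0 (numeral n))) ∧
      (n ∉ A → Proves T (Fml.not (φ.substN 0 (numeral n))))}

/-- Martin's axiom. -/
def MartinsAxiom : Prop :=
  ∀ (P : Type) (_ : PartialOrder P),
    (∀ A : Set P, ¬A.Countable → ∃ x ∈ A, ∃ y ∈ A, x ≠ y ∧ ∃ z, z ≤ x ∧ z ≤ y) →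
    ∀ 𝒟 : Set (Set P), (∀ D ∈ 𝒟, ∀ x : P, ∃ y ∈ D, y ≤ x) →
      Cardinal.mk 𝒟 < Cardinal.continuum →
      ∃ F : Set P, F.Nonempty ∧ (∀ x ∈ F, ∀ y, x ≤ y → y ∈ F) ∧
        (∀ x ∈ F, ∀ y ∈ F, ∃ z ∈ F, z ≤ x ∧ z ≤ y) ∧
        ∀ D ∈ 𝒟, (F ∩ D).Nonempty


/-!
Both halves are density arguments: the property is witnessed on a dense subset of `P_𝔛` that
is definable in `(M, 𝔛)`, and the generic `U` meets it.

For completeness, the sets on which `f` is constant are dense, since on an unbounded set a coded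
function with bounded range has an unbounded fibre (by collection).

For definability, fix `A ∈ 𝔛`. If some `Y ∈ U` is eventually inside or eventually outside every
slice `(A)_a`, then `(A)_a ∈ U` iff `Y ⊆* (A)_a`, which is arithmetical in `A` and `Y`; genericity
also makes `U` closed under almost-supersets. Such `Y` are dense: inside `X ∈ P_𝔛`, follow slice
by slice the branch of the tree of traces on `(A)_0, (A)_1, …` that stays unbounded in `X`. This
branch is not coded in `M`, so call `x` greedy below `a` if it follows the branch on the slices
`c < a`. Greedy elements exist unboundedly at every level and share their traces, and by
collection the least greedy elements above each `a` form a set `Y ⊆ X` that eventually decides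
every slice.
-/

namespace PAminusSem

variable {M : Type} {S : AStr M}

theorem add_assoc (h : PAminusSem S) (a b c : M) :
    S.add a (S.add b c) = S.add (S.add a b) c := h.1 a b c
theorem add_comm (h : PAminusSem S) (a b : M) : S.add a b = S.add b a := h.2.1 a b
theorem add_zero (h : PAminusSem S) (a : M) : S.add a S.zero = a := h.2.2.2.2.2.1 a
theorem lt_trans (h : PAminusSem S) {a b c : M} : S.lt a b → S.lt b c → S.lt a c :=
  h.2.2.2.2.2.2.2.2.1 a b c
theorem lt_irrefl (h : PAminusSem S) (a : M) : ¬ S.lt a a := h.2.2.2.2.2.2.2.2.2.1 a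
theorem lt_trichotomy (h : PAminusSem S) (a b : M) : S.lt a b ∨ a = b ∨ S.lt b a :=
  h.2.2.2.2.2.2.2.2.2.2.1 a b
theorem add_lt_add_right (h : PAminusSem S) {a b : M} (hab : S.lt a b) (c : M) :
    S.lt (S.add a c) (S.add b c) := h.2.2.2.2.2.2.2.2.2.2.2.1 a b c hab
theorem exists_add_of_lt (h : PAminusSem S) {a b : M} (hab : S.lt a b) :
    ∃ c, S.add a c = b := h.2.2.2.2.2.2.2.2.2.2.2.2.2.1 a b hab
theorem zero_lt_one (h : PAminusSem S) : S.lt S.zero S.one := h.2.2.2.2.2.2.2.2.2.2.2.2.2.2.1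
theorem eq_one_or_one_lt (h : PAminusSem S) {a : M} (ha : S.lt S.zero a) :
    a = S.one ∨ S.lt S.one a := h.2.2.2.2.2.2.2.2.2.2.2.2.2.2.2.1 a ha
theorem eq_zero_or_pos (h : PAminusSem S) (a : M) : a = S.zero ∨ S.lt S.zero a :=
  h.2.2.2.2.2.2.2.2.2.2.2.2.2.2.2.2 a

theorem zero_add (h : PAminusSem S) (a : M) : S.add S.zero a = a := by
  rw [h.add_comm]; exact h.add_zero a

theorem lt_add_of_pos (h : PAminusSem S) (a : M) {c : M} (hc : S.lt S.zero c) :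
    S.lt a (S.add a c) := by
  simpa only [h.zero_add, h.add_comm c] using h.add_lt_add_right hc a

theorem lt_succ_self (h : PAminusSem S) (a : M) : S.lt a (S.add a S.one) :=
  h.lt_add_of_pos a h.zero_lt_one

theorem not_lt_zero (h : PAminusSem S) (a : M) : ¬ S.lt a S.zero := by
  rcases h.eq_zero_or_pos a with rfl | ha
  · exact h.lt_irrefl _
  · exact fun ha0 => h.lt_irrefl _ (h.lt_trans ha ha0)

theorem lt_of_le_of_lt (h : PAminusSem S) {a b c : M} (hab : S.le a b) (hbc : S.lt b c) :
    S.lt a c := by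
  rcases hab with hab | rfl
  exacts [h.lt_trans hab hbc, hbc]

theorem lt_of_lt_of_le (h : PAminusSem S) {a b c : M} (hab : S.lt a b) (hbc : S.le b c) :
    S.lt a c := by
  rcases hbc with hbc | rfl
  exacts [h.lt_trans hab hbc, hab]

theorem le_trans (h : PAminusSem S) {a b c : M} (hab : S.le a b) (hbc : S.le b c) :
    S.le a c := by
  rcases hab with hab | rfl
  exacts [Or.inl (h.lt_of_lt_of_le hab hbc), hbc]

theorem le_of_not_lt (h : PAminusSem S) {a b : M} (hab : ¬ S.lt b a) : S.le a b := by
  rcases h.lt_trichotomy a b with hlt | rfl | hgt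
  exacts [Or.inl hlt, Or.inr rfl, absurd hgt hab]

theorem exists_le_le (h : PAminusSem S) (a b : M) : ∃ m, S.le a m ∧ S.le b m := by
  rcases h.lt_trichotomy a b with hlt | rfl | hgt
  exacts [⟨b, Or.inl hlt, Or.inr rfl⟩, ⟨a, Or.inr rfl, Or.inr rfl⟩, ⟨a, Or.inr rfl, Or.inl hgt⟩]

theorem succ_le_of_lt (h : PAminusSem S) {a b : M} (hab : S.lt a b) :
    S.le (S.add a S.one) b := by
  obtain ⟨c, rfl⟩ := h.exists_add_of_lt hab
  rcases h.eq_zero_or_pos c with rfl | hc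
  · rw [h.add_zero] at hab; exact absurd hab (h.lt_irrefl a)
  rcases h.eq_one_or_one_lt hc with rfl | hc1
  · exact Or.inr rfl
  obtain ⟨d, rfl⟩ := h.exists_add_of_lt hc1
  rcases h.eq_zero_or_pos d with rfl | hd
  · rw [h.add_zero] at hc1; exact absurd hc1 (h.lt_irrefl _)
  rw [h.add_assoc]
  exact Or.inl (h.lt_add_of_pos _ hd)

theorem lt_succ_iff (h : PAminusSem S) {a b : M} : S.lt a (S.add b S.one) ↔ S.le a b := by
  refine ⟨fun hab => ?_, fun hab => h.lt_of_le_of_lt hab (h.lt_succ_self b)⟩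
  rcases h.lt_trichotomy a b with hlt | rfl | hgt
  · exact Or.inl hlt
  · exact Or.inr rfl
  · exact absurd (h.lt_of_le_of_lt (h.succ_le_of_lt hgt) hab) (h.lt_irrefl _)

end PAminusSem

theorem AStr.Unb.exists_gt_gt {M : Type} {S : AStr M} (hPA : PAminusSem S) {A : Set M}
    (hA : S.Unb A) (b c : M) : ∃ x ∈ A, S.lt b x ∧ S.lt c x := by
  obtain ⟨m, hbm, hcm⟩ := hPA.exists_le_le b c
  obtain ⟨x, hx, hmx⟩ := hA m
  exact ⟨x, hx, hPA.lt_of_le_of_lt hbm hmx, hPA.lt_of_le_of_lt hcm hmx⟩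

section Satisfaction

variable {M : Type} {S : AStr M} {𝔛 : Set (Set M)} {v : ℕ → M} {w : ℕ → Set M}

@[simp] theorem sat_and {φ ψ : Fml} :
    Sat S 𝔛 v w (φ.and ψ) ↔ Sat S 𝔛 v w φ ∧ Sat S 𝔛 v w ψ := by
  simp [Fml.and, Sat]

@[simp] theorem sat_or {φ ψ : Fml} :
    Sat S 𝔛 v w (φ.or ψ) ↔ Sat S 𝔛 v w φ ∨ Sat S 𝔛 v w ψ := by
  simp [Fml.or, Sat, or_iff_not_imp_left]

@[simp] theorem sat_iff {φ ψ : Fml} :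
    Sat S 𝔛 v w (φ.iff ψ) ↔ (Sat S 𝔛 v w φ ↔ Sat S 𝔛 v w ψ) := by
  simp [Fml.iff, Sat, iff_iff_implies_and_implies]

@[simp] theorem sat_ex {x : ℕ} {φ : Fml} :
    Sat S 𝔛 v w (Fml.ex x φ) ↔ ∃ a, Sat S 𝔛 (Function.update v x a) w φ := by
  simp [Fml.ex, Sat]

/-- `pairF p a b` says `p = ⟨a, b⟩`. -/
def pairF (p a b : ℕ) : Fml :=
  .eq (.mul (.add .one .one) (.var p))
    (.add (.mul (.add (.var a) (.var b)) (.add (.add (.var a) (.var b)) .one))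
      (.mul (.add .one .one) (.var a)))

/-- `sliceF b a k p` says `b ∈ (X_k)_a`, using `p` as the bound variable. -/
def sliceF (b a k p : ℕ) : Fml :=
  Fml.ex p ((pairF p a b).and (.mem (.var p) k))

@[simp] theorem isArith_and {φ ψ : Fml} : (φ.and ψ).IsArith ↔ φ.IsArith ∧ ψ.IsArith := by
  simp [Fml.and, Fml.IsArith]

@[simp] theorem isArith_or {φ ψ : Fml} : (φ.or ψ).IsArith ↔ φ.IsArith ∧ ψ.IsArith := by
  simp [Fml.or, Fml.IsArith]

@[simp] theorem isArith_iff {φ ψ : Fml} : (φ.iff ψ).IsArith ↔ φ.IsArith ∧ ψ.IsArith := by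
  simp [Fml.iff, Fml.IsArith, and_comm]

@[simp] theorem isArith_ex {x : ℕ} {φ : Fml} : (Fml.ex x φ).IsArith ↔ φ.IsArith := by
  simp [Fml.ex, Fml.IsArith]

@[simp] theorem isArith_sliceF {b a k p : ℕ} : (sliceF b a k p).IsArith := by
  simp [sliceF, pairF, Fml.IsArith]

theorem sat_sliceF {b a k p : ℕ} (hpa : p ≠ a) (hpb : p ≠ b) :
    Sat S 𝔛 v w (sliceF b a k p) ↔ v b ∈ S.SliceAt (w k) (v a) := by
  simp [sliceF, pairF, Sat, PTerm.val, AStr.SliceAt, AStr.PairRel, AStr.two,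
    hpa.symm, hpb.symm]

end Satisfaction

namespace SatACA0

variable {M : Type} {S : AStr M} {𝔛 : Set (Set M)}

theorem mem_of_iff_sat (hACA : SatACA0 S 𝔛) {φ : Fml} (hφ : φ.IsArith) (x : ℕ) (v : ℕ → M)
    {w : ℕ → Set M} (hw : ∀ k, w k ∈ 𝔛) {Z : Set M}
    (hZ : ∀ a, a ∈ Z ↔ Sat S 𝔛 (Function.update v x a) w φ) : Z ∈ 𝔛 := by
  convert hACA.2.2 φ x hφ v w hw
  exact Set.ext hZ

theorem induction (hACA : SatACA0 S 𝔛) {Z : Set M} (hZ : Z ∈ 𝔛) (h0 : S.zero ∈ Z)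
    (hs : ∀ a ∈ Z, S.add a S.one ∈ Z) (a : M) : a ∈ Z :=
  hACA.2.1 Z hZ h0 hs a

theorem inter_mem (hACA : SatACA0 S 𝔛) {X Z : Set M} (hX : X ∈ 𝔛) (hZ : Z ∈ 𝔛) :
    X ∩ Z ∈ 𝔛 :=
  hACA.mem_of_iff_sat (φ := (Fml.mem (.var 0) 0).and (.mem (.var 0) 1))
    (by simp [Fml.IsArith]) 0 (fun _ => S.zero) (w := fun i => if i = 0 then X else Z)
    (fun i => by split_ifs <;> assumption) fun a => by simp [Sat, PTerm.val]

theorem inter_setOf_lt_mem (hACA : SatACA0 S 𝔛) {C : Set M} (hC : C ∈ 𝔛) (b : M) :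
    C ∩ {x | S.lt b x} ∈ 𝔛 :=
  hACA.mem_of_iff_sat (φ := (Fml.mem (.var 0) 0).and (.lt (.var 1) (.var 0)))
    (by simp [Fml.IsArith]) 0 (fun _ => b) (fun _ => hC)
    fun a => by simp [Sat, PTerm.val]

theorem slice_mem (hACA : SatACA0 S 𝔛) {A : Set M} (hA : A ∈ 𝔛) (a : M) :
    S.SliceAt A a ∈ 𝔛 :=
  hACA.mem_of_iff_sat (φ := sliceF 0 1 0 2) isArith_sliceF 0
    (fun _ => a) (fun _ => hA) fun b => by simp [sat_sliceF]

theorem preimage_singleton_mem (hACA : SatACA0 S 𝔛) {f : M → M} (hf : S.CodedFun 𝔛 f) (c : M) :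
    f ⁻¹' {c} ∈ 𝔛 := by
  obtain ⟨G, hG, hGraph⟩ := hf
  exact hACA.mem_of_iff_sat (φ := sliceF 1 0 0 2) isArith_sliceF 0
    (fun _ => c) (fun _ => hG) fun x => by simp [sat_sliceF, hGraph]

theorem exists_least_mem (hACA : SatACA0 S 𝔛) {Z : Set M} (hZ : Z ∈ 𝔛) {z : M} (hz : z ∈ Z) :
    ∃ a ∈ Z, ∀ a', S.lt a' a → a' ∉ Z := by
  have hPA := hACA.1
  by_contra! hno
  have hN : {a | ∀ a', S.le a' a → a' ∉ Z} ∈ 𝔛 :=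
    hACA.mem_of_iff_sat (φ := .all 1 (.imp ((Fml.lt (.var 1) (.var 0)).or (.eq (.var 1) (.var 0)))
      (.not (.mem (.var 1) 0)))) (by simp [Fml.IsArith]) 0 (fun _ => z) (fun _ => hZ)
      fun a => by simp [Sat, PTerm.val, AStr.le]
  refine hACA.induction hN (fun a' ha' ha'Z => ?_) (fun a ha a' ha' ha'Z => ?_) z z (Or.inr rfl) hz
  · rcases ha' with ha' | rfl
    · exact hPA.not_lt_zero a' ha'
    · obtain ⟨b, hb, -⟩ := hno _ ha'Z
      exact hPA.not_lt_zero b hb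
  · rcases ha' with ha' | rfl
    · exact ha a' (hPA.lt_succ_iff.mp ha') ha'Z
    · obtain ⟨b, hb, hbZ⟩ := hno _ ha'Z
      exact ha b (hPA.lt_succ_iff.mp hb) hbZ

theorem bounded_collection (hACA : SatACA0 S 𝔛) {B : M → M → Prop}
    (hdef : {n | ∃ m, ∀ c, S.lt c n → ∀ x, B c x → S.le x m} ∈ 𝔛)
    (hB : ∀ c, ∃ m, ∀ x, B c x → S.le x m) (n : M) :
    ∃ m, ∀ c, S.lt c n → ∀ x, B c x → S.le x m := by
  have hPA := hACA.1
  refine hACA.induction hdef ⟨S.zero, fun c hc => absurd hc (hPA.not_lt_zero c)⟩ ?_ n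
  rintro n ⟨m, hm⟩
  obtain ⟨m', hm'⟩ := hB n
  obtain ⟨m'', hm₁, hm₂⟩ := hPA.exists_le_le m m'
  refine ⟨m'', fun c hc x hx => ?_⟩
  rcases hPA.lt_succ_iff.mp hc with hc | rfl
  · exact hPA.le_trans (hm c hc x hx) hm₁
  · exact hPA.le_trans (hm' x hx) hm₂

end SatACA0

namespace AStr

variable {M : Type} (S : AStr M)

/-- `Y ⊆* Z`. -/
def AlmostSubset (Y Z : Set M) : Prop := ∃ b, ∀ x ∈ Y, S.lt b x → x ∈ Z

def IsGeneric (𝔛 U : Set (Set M)) : Prop :=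
  ∀ D : Set (Set M), D ⊆ S.PX 𝔛 →
    (∀ X ∈ S.PX 𝔛, ∃ Y ∈ D, Y ⊆ X) →
    (∃ (φ : Fml) (k : ℕ) (v : ℕ → M) (w : ℕ → Set M), (∀ i, w i ∈ 𝔛) ∧
      D = {X | X ∈ S.PX 𝔛 ∧ Sat S 𝔛 v (Function.update w k X) φ}) →
    (U ∩ D).Nonempty

def DefinableProp (𝔛 : Set (Set M)) (P : Set M → Prop) : Prop :=
  ∃ (φ : Fml) (k : ℕ) (v : ℕ → M) (w : ℕ → Set M), (∀ i, w i ∈ 𝔛) ∧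
    ∀ X, P X ↔ Sat S 𝔛 v (Function.update w k X) φ

variable {S} {𝔛 U : Set (Set M)}

theorem AlmostSubset.unb (hPA : PAminusSem S) {Y Z : Set M} (hYZ : S.AlmostSubset Y Z)
    (hY : S.Unb Y) : S.Unb Z := by
  obtain ⟨b, hb⟩ := hYZ
  intro d
  obtain ⟨x, hx, hdx, hbx⟩ := hY.exists_gt_gt hPA d b
  exact ⟨x, hb x hx hbx, hdx⟩

theorem IsGeneric.exists_mem (hGen : S.IsGeneric 𝔛 U) {P : Set M → Prop}
    (hP : S.DefinableProp 𝔛 P) (hdense : ∀ X ∈ S.PX 𝔛, ∃ Y ∈ S.PX 𝔛, Y ⊆ X ∧ P Y) :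
    ∃ Y ∈ U, P Y := by
  obtain ⟨φ, k, v, w, hw, hPφ⟩ := hP
  obtain ⟨Y, hYU, -, hY⟩ := hGen {X | X ∈ S.PX 𝔛 ∧ P X} (fun _ hX => hX.1)
    (fun X hX => (hdense X hX).imp fun Y ⟨hY, hYX, hPY⟩ => ⟨⟨hY, hPY⟩, hYX⟩)
    ⟨φ, k, v, w, hw, by simp only [hPφ]⟩
  exact ⟨Y, hYU, hY⟩

end AStr

namespace IsFilterOn

variable {α : Type} {P F : Set (Set α)}

theorem mem_of_subset (hF : IsFilterOn P F) {A B : Set α} (hA : A ∈ F) (hB : B ∈ P)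
    (hAB : A ⊆ B) : B ∈ F :=
  hF.2.2.2.1 A hA B hB hAB

theorem exists_mem_inter_gt {M : Type} {S : AStr M} {𝔛 F : Set (Set M)}
    (hF : IsFilterOn (S.PX 𝔛) F) {A B : Set M} (hA : A ∈ F) (hB : B ∈ F) (b : M) :
    ∃ x ∈ A ∩ B, S.lt b x := by
  obtain ⟨C, hC, hCA, hCB⟩ := hF.2.2.2.2 A hA B hB
  obtain ⟨x, hx, hbx⟩ := (hF.1 hC).2 b
  exact ⟨x, ⟨hCA hx, hCB hx⟩, hbx⟩

end IsFilterOn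

section Generic

variable {M : Type} {S : AStr M} {𝔛 U : Set (Set M)}

theorem definableProp_subset_or_disjoint {Z : Set M} (hZ : Z ∈ 𝔛) :
    S.DefinableProp 𝔛 fun Y => Y ⊆ Z ∨ Disjoint Y Z :=
  ⟨(Fml.all 0 ((Fml.mem (.var 0) 0).imp (.mem (.var 0) 1))).or
      (.all 0 ((Fml.mem (.var 0) 0).imp (.not (.mem (.var 0) 1)))),
    0, fun _ => S.zero, fun _ => Z, fun _ => hZ, fun Y => by
      simp [Sat, PTerm.val, Set.subset_def, Set.disjoint_left]⟩

theorem AStr.IsGeneric.exists_mem_subset_or_disjoint (hACA : SatACA0 S 𝔛) (hGen : S.IsGeneric 𝔛 U)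
    {Z : Set M} (hZ : Z ∈ 𝔛) : ∃ Y ∈ U, Y ⊆ Z ∨ Disjoint Y Z := by
  refine hGen.exists_mem (definableProp_subset_or_disjoint hZ) fun X ⟨hX, hXu⟩ => ?_
  by_cases hXZ : S.Unb (X ∩ Z)
  · exact ⟨X ∩ Z, ⟨hACA.inter_mem hX hZ, hXZ⟩, Set.inter_subset_left,
      Or.inl Set.inter_subset_right⟩
  simp only [AStr.Unb, not_forall, not_exists, not_and] at hXZ
  obtain ⟨m, hm⟩ := hXZ
  refine ⟨X ∩ {x | S.lt m x}, ⟨hACA.inter_setOf_lt_mem hX m, fun d => ?_⟩,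
    Set.inter_subset_left, Or.inr (Set.disjoint_left.mpr fun x ⟨hxX, hmx⟩ hxZ =>
      hm x ⟨hxX, hxZ⟩ hmx)⟩
  obtain ⟨x, hx, hdx, hmx⟩ := hXu.exists_gt_gt hACA.1 d m
  exact ⟨x, ⟨hx, hmx⟩, hdx⟩

theorem mem_of_almostSubset (hACA : SatACA0 S 𝔛) (hU : IsFilterOn (S.PX 𝔛) U)
    (hGen : S.IsGeneric 𝔛 U) {C Z : Set M} (hC : C ∈ U) (hZ : Z ∈ S.PX 𝔛)
    (hCZ : S.AlmostSubset C Z) : Z ∈ U := by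
  obtain ⟨Y, hYU, hYZ | hYZ⟩ := hGen.exists_mem_subset_or_disjoint hACA hZ.1
  · exact hU.mem_of_subset hYU hZ hYZ
  · obtain ⟨b, hb⟩ := hCZ
    obtain ⟨x, ⟨hxY, hxC⟩, hbx⟩ := hU.exists_mem_inter_gt hYU hC b
    exact absurd (hb x hxC hbx) (Set.disjoint_left.mp hYZ hxY)

end Generic

section Completeness

variable {M : Type} {S : AStr M} {𝔛 U : Set (Set M)}

theorem AStr.CodedFun.definableProp_isConst {f : M → M} (hf : S.CodedFun 𝔛 f) :
    S.DefinableProp 𝔛 fun Y => ∀ x ∈ Y, ∀ y ∈ Y, f x = f y := by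
  obtain ⟨G, hG, hGraph⟩ := hf
  refine ⟨.all 0 (.all 1 ((Fml.mem (.var 0) 0).imp ((Fml.mem (.var 1) 0).imp
    (.all 2 (.all 3 ((sliceF 2 0 1 4).imp ((sliceF 3 1 1 4).imp (.eq (.var 2) (.var 3))))))))),
    0, fun _ => S.zero, fun _ => G, fun _ => hG, fun Y => ?_⟩
  simp [Sat, sat_sliceF, PTerm.val, ← hGraph]
  exact ⟨fun h x y hx hy => h x hx y hy, fun h x hx y hy => h x y hx hy⟩

/-- If every fibre were bounded, collection would bound their union, which is all of `X`. -/
theorem AStr.CodedFun.exists_fiber_mem_PX (hACA : SatACA0 S 𝔛) {f : M → M}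
    (hf : S.CodedFun 𝔛 f) {bnd : M} (hbnd : ∀ a, S.lt (f a) bnd) {X : Set M}
    (hX : X ∈ S.PX 𝔛) : ∃ c, X ∩ f ⁻¹' {c} ∈ S.PX 𝔛 := by
  have hPA := hACA.1
  by_contra! hno
  have hbdd : ∀ c, ∃ m, ∀ x, x ∈ X ∧ f x = c → S.le x m := fun c => by
    have hunb : ¬ S.Unb (X ∩ f ⁻¹' {c}) := fun hu =>
      hno c ⟨hACA.inter_mem hX.1 (hACA.preimage_singleton_mem hf c), hu⟩
    simp only [AStr.Unb, not_forall, not_exists, not_and] at hunb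
    obtain ⟨m, hm⟩ := hunb
    exact ⟨m, fun x hx => hPA.le_of_not_lt (hm x hx)⟩
  obtain ⟨G, hG, hGraph⟩ := hf
  have hdef : {n | ∃ m, ∀ c, S.lt c n → ∀ x, x ∈ X ∧ f x = c → S.le x m} ∈ 𝔛 :=
    hACA.mem_of_iff_sat (φ := Fml.ex 1 (.all 2 ((Fml.lt (.var 2) (.var 0)).imp
      (.all 3 ((Fml.mem (.var 3) 0).imp ((sliceF 2 3 1 4).imp
        ((Fml.lt (.var 3) (.var 1)).or (.eq (.var 3) (.var 1)))))))))
      (by simp [Fml.IsArith]) 0 (fun _ => S.zero)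
      (w := fun i => if i = 0 then X else G) (fun i => by split_ifs; exacts [hX.1, hG])
      fun n => by simp [Sat, sat_sliceF, PTerm.val, AStr.le, ← hGraph]
  obtain ⟨m, hm⟩ := hACA.bounded_collection hdef hbdd bnd
  obtain ⟨x, hx, hmx⟩ := hX.2 m
  exact hPA.lt_irrefl x (hPA.lt_of_le_of_lt (hm (f x) (hbnd x) x ⟨hx, rfl⟩) hmx)

theorem completeOn_of_isGeneric (hACA : SatACA0 S 𝔛) (hGen : S.IsGeneric 𝔛 U) :
    S.CompleteOn 𝔛 U := by
  rintro f hf ⟨bnd, hbnd⟩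
  refine hGen.exists_mem hf.definableProp_isConst fun X hX => ?_
  obtain ⟨c, hc⟩ := hf.exists_fiber_mem_PX hACA hbnd hX
  exact ⟨X ∩ f ⁻¹' {c}, hc, Set.inter_subset_left, fun x hx y hy => hx.2.trans hy.2.symm⟩

end Completeness

namespace AStr

variable {M : Type} (S : AStr M)

def SameTrace (A : Set M) (c x y : M) : Prop :=
  ∀ d, S.lt d c → (x ∈ S.SliceAt A d ↔ y ∈ S.SliceAt A d)

def Heavy (A X : Set M) (c x : M) : Prop :=
  ∀ d, ∃ y ∈ X, S.lt d y ∧ S.SameTrace A c y x ∧ y ∈ S.SliceAt A c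

/-- Along the slices `(A)_c`, `c < a`, the element `x` follows the branch that stays
unbounded in `X`. -/
def IsGreedy (A X : Set M) (a x : M) : Prop :=
  ∀ c, S.lt c a → (x ∈ S.SliceAt A c ↔ S.Heavy A X c x)

def IsGreedyAbove (A X : Set M) (a x : M) : Prop :=
  x ∈ X ∧ S.lt a x ∧ S.IsGreedy A X a x

def IsLeastGreedyAbove (A X : Set M) (a x : M) : Prop :=
  S.IsGreedyAbove A X a x ∧ ∀ x', S.lt x' x → ¬ S.IsGreedyAbove A X a x'

def greedySubset (A X : Set M) : Set M := {x | ∃ a, S.IsLeastGreedyAbove A X a x}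

def DecidesSlices (A Y : Set M) : Prop :=
  ∀ a, S.AlmostSubset Y (S.SliceAt A a) ∨ S.AlmostSubset Y (S.SliceAt A a)ᶜ

end AStr

section GreedyFormulas

/-! The set parameters are `A = X_0` and `X = X_1`; the variables `9`–`15` are reserved for
bound variables. -/

variable {M : Type} {S : AStr M} {𝔛 : Set (Set M)} {v : ℕ → M} {w : ℕ → Set M}

def sameTraceFml (c x y : ℕ) : Fml :=
  .all 14 ((Fml.lt (.var 14) (.var c)).imp ((sliceF x 14 0 15).iff (sliceF y 14 0 15)))

theorem sat_sameTraceFml {c x y : ℕ} (hc : c < 14) (hx : x < 14) (hy : y < 14) :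
    Sat S 𝔛 v w (sameTraceFml c x y) ↔ S.SameTrace (w 0) (v c) (v x) (v y) := by
  simp [sameTraceFml, Sat, sat_sliceF (by omega : 15 ≠ 14) (by omega : 15 ≠ x),
    sat_sliceF (by omega : 15 ≠ 14) (by omega : 15 ≠ y), PTerm.val, AStr.SameTrace, hc.ne,
    hx.ne, hy.ne]

def isGreedyFml (a x : ℕ) : Fml :=
  .all 10 ((Fml.lt (.var 10) (.var a)).imp ((sliceF x 10 0 11).iff
    (.all 12 (Fml.ex 13 ((Fml.mem (.var 13) 1).and ((Fml.lt (.var 12) (.var 13)).and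
      ((sameTraceFml 10 13 x).and (sliceF 13 10 0 11))))))))

theorem sat_isGreedyFml {a x : ℕ} (ha : a < 10) (hx : x < 10) :
    Sat S 𝔛 v w (isGreedyFml a x) ↔ S.IsGreedy (w 0) (w 1) (v a) (v x) := by
  simp [isGreedyFml, Sat, sat_sliceF (by omega : 11 ≠ 10) (by omega : 11 ≠ x), sat_sliceF,
    sat_sameTraceFml (by omega : 10 < 14) (by omega : 13 < 14) (by omega : x < 14), PTerm.val,
    AStr.IsGreedy, AStr.Heavy, ha.ne, hx.ne, Function.update_of_ne (by omega : x ≠ 12),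
    Function.update_of_ne (by omega : x ≠ 13)]

def isGreedyAboveFml (a x : ℕ) : Fml :=
  (Fml.mem (.var x) 1).and ((Fml.lt (.var a) (.var x)).and (isGreedyFml a x))

theorem sat_isGreedyAboveFml {a x : ℕ} (ha : a < 10) (hx : x < 10) :
    Sat S 𝔛 v w (isGreedyAboveFml a x) ↔ S.IsGreedyAbove (w 0) (w 1) (v a) (v x) := by
  simp [isGreedyAboveFml, Sat, sat_isGreedyFml ha hx, PTerm.val, AStr.IsGreedyAbove]

def isLeastGreedyAboveFml (a x : ℕ) : Fml :=
  (isGreedyAboveFml a x).and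
    (.all 9 ((Fml.lt (.var 9) (.var x)).imp (.not (isGreedyAboveFml a 9))))

theorem sat_isLeastGreedyAboveFml {a x : ℕ} (ha : a < 9) (hx : x < 9) :
    Sat S 𝔛 v w (isLeastGreedyAboveFml a x) ↔
      S.IsLeastGreedyAbove (w 0) (w 1) (v a) (v x) := by
  simp [isLeastGreedyAboveFml, Sat, sat_isGreedyAboveFml (by omega : a < 10) (by omega : x < 10),
    sat_isGreedyAboveFml (by omega : a < 10) (by omega : 9 < 10), PTerm.val,
    AStr.IsLeastGreedyAbove, Function.update_of_ne (by omega : a ≠ 9),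
    Function.update_of_ne (by omega : x ≠ 9)]

@[simp] theorem isArith_isGreedyAboveFml {a x : ℕ} : (isGreedyAboveFml a x).IsArith := by
  simp [isGreedyAboveFml, isGreedyFml, sameTraceFml, Fml.IsArith]

@[simp] theorem isArith_isLeastGreedyAboveFml {a x : ℕ} :
    (isLeastGreedyAboveFml a x).IsArith := by
  simp [isLeastGreedyAboveFml, Fml.IsArith]

end GreedyFormulas

section Greedy

variable {M : Type} {S : AStr M} {𝔛 U : Set (Set M)} {A X : Set M}

namespace AStr

theorem SameTrace.symm {c x y : M} (h : S.SameTrace A c x y) : S.SameTrace A c y x :=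
  fun d hd => (h d hd).symm

theorem SameTrace.trans {c x y z : M} (h₁ : S.SameTrace A c x y) (h₂ : S.SameTrace A c y z) :
    S.SameTrace A c x z :=
  fun d hd => (h₁ d hd).trans (h₂ d hd)

theorem SameTrace.mono (hPA : PAminusSem S) {c c' x y : M} (h : S.SameTrace A c x y)
    (hc : S.le c' c) : S.SameTrace A c' x y :=
  fun d hd => h d (hPA.lt_of_lt_of_le hd hc)

theorem SameTrace.heavy_iff {c x z : M} (h : S.SameTrace A c x z) :
    S.Heavy A X c x ↔ S.Heavy A X c z :=
  ⟨fun hx d => (hx d).imp fun _ ⟨hy, hdy, hyx, hyA⟩ => ⟨hy, hdy, hyx.trans h, hyA⟩,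
    fun hz d => (hz d).imp fun _ ⟨hy, hdy, hyz, hyA⟩ => ⟨hy, hdy, hyz.trans h.symm, hyA⟩⟩

theorem IsGreedy.mono (hPA : PAminusSem S) {a a' x : M} (h : S.IsGreedy A X a x)
    (ha : S.le a' a) : S.IsGreedy A X a' x :=
  fun c hc => h c (hPA.lt_of_lt_of_le hc ha)

theorem IsGreedy.of_sameTrace (hPA : PAminusSem S) {a x z : M} (hx : S.IsGreedy A X a x)
    (hzx : S.SameTrace A a z x) : S.IsGreedy A X a z := fun c hc => by
  rw [hzx c hc, hx c hc, (hzx.mono hPA (Or.inl hc)).heavy_iff]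

theorem IsGreedy.succ (hPA : PAminusSem S) {a x : M} (hx : S.IsGreedy A X a x)
    (hstep : x ∈ S.SliceAt A a ↔ S.Heavy A X a x) : S.IsGreedy A X (S.add a S.one) x :=
  fun c hc => by
    rcases hPA.lt_succ_iff.mp hc with hc | rfl
    exacts [hx c hc, hstep]

/-- At the least `d` where `x` and `z` differ they share their trace below `d`, so both lie
in `(A)_d` iff the same trace class is heavy there. -/
theorem IsGreedy.sameTrace (hACA : SatACA0 S 𝔛) (hA : A ∈ 𝔛) {a x z : M}
    (hx : S.IsGreedy A X a x) (hz : S.IsGreedy A X a z) : S.SameTrace A a x z := by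
  by_contra hxz
  simp only [SameTrace, not_forall] at hxz
  obtain ⟨d, hd, hdiff⟩ := hxz
  have hdis : {d | S.lt d a ∧ ¬(x ∈ S.SliceAt A d ↔ z ∈ S.SliceAt A d)} ∈ 𝔛 :=
    hACA.mem_of_iff_sat (φ := (Fml.lt (.var 0) (.var 1)).and
      (.not ((sliceF 2 0 0 4).iff (sliceF 3 0 0 4))))
      (by simp [Fml.IsArith]) 0
      (Function.update (Function.update (fun _ => a) 2 x) 3 z) (fun _ => hA)
      fun d => by simp [Sat, sat_sliceF, PTerm.val]
  obtain ⟨d₀, ⟨hd₀, hdiff₀⟩, hleast⟩ := hACA.exists_least_mem hdis ⟨hd, hdiff⟩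
  have hbelow : S.SameTrace A d₀ x z := fun d' hd' => by
    by_contra h
    exact hleast d' hd' ⟨hACA.1.lt_trans hd' hd₀, h⟩
  exact hdiff₀ (by rw [hx d₀ hd₀, hz d₀ hd₀, hbelow.heavy_iff])

/-- Go into `(A)_a` if the trace class of the greedy elements is heavy there, and stay out of
it otherwise. -/
theorem exists_isGreedyAbove_succ (hACA : SatACA0 S 𝔛) (hA : A ∈ 𝔛) {a : M}
    (ih : ∀ d, ∃ x, S.lt d x ∧ S.IsGreedyAbove A X a x) (d : M) :
    ∃ x, S.lt d x ∧ S.IsGreedyAbove A X (S.add a S.one) x := by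
  have hPA := hACA.1
  obtain ⟨m, hdm, ham⟩ := hPA.exists_le_le d (S.add a S.one)
  obtain ⟨x₀, -, -, -, hx₀⟩ := ih S.zero
  by_cases hheavy : S.Heavy A X a x₀
  · obtain ⟨y, hy, hmy, hyx₀, hyA⟩ := hheavy m
    have hyg : S.IsGreedy A X a y := hx₀.of_sameTrace hPA hyx₀
    exact ⟨y, hPA.lt_of_le_of_lt hdm hmy, hy, hPA.lt_of_le_of_lt ham hmy,
      hyg.succ hPA (iff_of_true hyA (hyx₀.heavy_iff.mpr hheavy))⟩
  · simp only [Heavy, not_forall, not_exists, not_and] at hheavy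
    obtain ⟨b, hb⟩ := hheavy
    obtain ⟨m', hmm', hbm'⟩ := hPA.exists_le_le m b
    obtain ⟨x, hm'x, hx, hax, hxg⟩ := ih m'
    have hxx₀ : S.SameTrace A a x x₀ := hxg.sameTrace hACA hA hx₀
    have hmx := hPA.lt_of_le_of_lt hmm' hm'x
    refine ⟨x, hPA.lt_of_le_of_lt hdm hmx, hx, hPA.lt_of_le_of_lt ham hmx,
      hxg.succ hPA (iff_of_false (hb x hx (hPA.lt_of_le_of_lt hbm' hm'x) hxx₀) ?_)⟩
    rw [hxx₀.heavy_iff]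
    intro hheavy
    obtain ⟨y, hy, hby, hyx₀, hyA⟩ := hheavy b
    exact hb y hy hby hyx₀ hyA

theorem exists_isGreedyAbove (hACA : SatACA0 S 𝔛) (hA : A ∈ 𝔛) (hX : X ∈ S.PX 𝔛) (a d : M) :
    ∃ x, S.lt d x ∧ S.IsGreedyAbove A X a x := by
  have hPA := hACA.1
  have hlev : {a | ∀ d, ∃ x, S.lt d x ∧ S.IsGreedyAbove A X a x} ∈ 𝔛 :=
    hACA.mem_of_iff_sat (φ := .all 1 (Fml.ex 2 ((Fml.lt (.var 1) (.var 2)).and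
      (isGreedyAboveFml 0 2))))
      (by simp [Fml.IsArith]) 0 (fun _ => S.zero)
      (w := fun i => if i = 0 then A else X) (fun i => by split_ifs; exacts [hA, hX.1])
      fun a => by
        simp [Sat, sat_isGreedyAboveFml (by omega : 0 < 10) (by omega : 2 < 10), PTerm.val]
  refine hACA.induction hlev (fun d => ?_) (fun a ih => exists_isGreedyAbove_succ hACA hA ih) a d
  obtain ⟨x, hx, hdx, h0x⟩ := hX.2.exists_gt_gt hPA d S.zero
  exact ⟨x, hdx, hx, h0x, fun c hc => absurd hc (hPA.not_lt_zero c)⟩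

theorem exists_isLeastGreedyAbove (hACA : SatACA0 S 𝔛) (hA : A ∈ 𝔛) (hX : X ∈ S.PX 𝔛)
    (a : M) : ∃ x, S.IsLeastGreedyAbove A X a x := by
  obtain ⟨x₀, -, hx₀⟩ := exists_isGreedyAbove hACA hA hX a S.zero
  have hmem : {x | S.IsGreedyAbove A X a x} ∈ 𝔛 :=
    hACA.mem_of_iff_sat (φ := isGreedyAboveFml 1 0) isArith_isGreedyAboveFml 0
      (fun _ => a) (w := fun i => if i = 0 then A else X)
      (fun i => by split_ifs; exacts [hA, hX.1])
      fun x => by simp [sat_isGreedyAboveFml (by omega : 1 < 10) (by omega : 0 < 10)]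
  obtain ⟨x, hx, hleast⟩ := hACA.exists_least_mem hmem hx₀
  exact ⟨x, hx, hleast⟩

theorem IsLeastGreedyAbove.unique (hPA : PAminusSem S) {a x z : M}
    (hx : S.IsLeastGreedyAbove A X a x) (hz : S.IsLeastGreedyAbove A X a z) : x = z := by
  rcases hPA.lt_trichotomy x z with hxz | hxz | hzx
  exacts [absurd hx.1 (hz.2 x hxz), hxz, absurd hz.1 (hx.2 z hzx)]

theorem greedySubset_subset : S.greedySubset A X ⊆ X := fun _ ⟨_, hx⟩ => hx.1.1

theorem greedySubset_mem_PX (hACA : SatACA0 S 𝔛) (hA : A ∈ 𝔛) (hX : X ∈ S.PX 𝔛) :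
    S.greedySubset A X ∈ S.PX 𝔛 := by
  refine ⟨hACA.mem_of_iff_sat (φ := Fml.ex 1 (isLeastGreedyAboveFml 1 0))
    (by simp) 0 (fun _ => S.zero)
    (w := fun i => if i = 0 then A else X) (fun i => by split_ifs; exacts [hA, hX.1])
    fun x => by
      simp [greedySubset, sat_isLeastGreedyAboveFml (by omega : 1 < 9) (by omega : 0 < 9)],
    fun d => ?_⟩
  obtain ⟨x, hx⟩ := exists_isLeastGreedyAbove hACA hA hX d
  exact ⟨x, ⟨d, hx⟩, hx.1.2.1⟩

theorem exists_bound_isLeastGreedyAbove (hACA : SatACA0 S 𝔛) (hA : A ∈ 𝔛)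
    (hX : X ∈ S.PX 𝔛) (a : M) :
    ∃ m, ∀ c, S.lt c a → ∀ x, S.IsLeastGreedyAbove A X c x → S.le x m := by
  refine hACA.bounded_collection ?_ (fun c => ?_) a
  · exact hACA.mem_of_iff_sat (φ := Fml.ex 1 (.all 2 ((Fml.lt (.var 2) (.var 0)).imp
      (.all 3 ((isLeastGreedyAboveFml 2 3).imp ((Fml.lt (.var 3) (.var 1)).or
        (.eq (.var 3) (.var 1))))))))
      (by simp [Fml.IsArith]) 0 (fun _ => S.zero)
      (w := fun i => if i = 0 then A else X) (fun i => by split_ifs; exacts [hA, hX.1])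
      fun n => by
        simp [Sat, sat_isLeastGreedyAboveFml (by omega : 2 < 9) (by omega : 3 < 9), PTerm.val,
          AStr.le]
  · obtain ⟨x, hx⟩ := exists_isLeastGreedyAbove hACA hA hX c
    exact ⟨x, fun x' hx' => Or.inr (hx'.unique hACA.1 hx)⟩

/-- Beyond the bound for the levels `c ≤ a`, all elements of the greedy subset are greedy below
`a + 1`, hence share their trace on `(A)_a`. -/
theorem greedySubset_decidesSlices (hACA : SatACA0 S 𝔛) (hA : A ∈ 𝔛) (hX : X ∈ S.PX 𝔛) :
    S.DecidesSlices A (S.greedySubset A X) := by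
  intro a
  have hPA := hACA.1
  obtain ⟨m, hm⟩ := exists_bound_isLeastGreedyAbove hACA hA hX (S.add a S.one)
  have hgreedy : ∀ y ∈ S.greedySubset A X, S.lt m y → S.IsGreedy A X (S.add a S.one) y := by
    rintro y ⟨c, hy⟩ hmy
    refine hy.1.2.2.mono hPA (hPA.le_of_not_lt fun hc => ?_)
    exact hPA.lt_irrefl _ (hPA.lt_of_le_of_lt (hm c hc y hy) hmy)
  have hsame : ∀ y ∈ S.greedySubset A X, ∀ z ∈ S.greedySubset A X, S.lt m y → S.lt m z →
      (y ∈ S.SliceAt A a ↔ z ∈ S.SliceAt A a) := fun y hy z hz hmy hmz =>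
    ((hgreedy y hy hmy).sameTrace hACA hA (hgreedy z hz hmz)) a (hPA.lt_succ_self a)
  obtain ⟨z, hz, hmz⟩ := (greedySubset_mem_PX hACA hA hX).2 m
  by_cases hzA : z ∈ S.SliceAt A a
  · exact Or.inl ⟨m, fun y hy hmy => (hsame y hy z hz hmy hmz).mpr hzA⟩
  · exact Or.inr ⟨m, fun y hy hmy hyA => hzA ((hsame y hy z hz hmy hmz).mp hyA)⟩

theorem definableProp_decidesSlices (hA : A ∈ 𝔛) : S.DefinableProp 𝔛 (S.DecidesSlices A) :=
  ⟨.all 0 ((Fml.ex 1 (.all 2 ((Fml.mem (.var 2) 0).imp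
      ((Fml.lt (.var 1) (.var 2)).imp (sliceF 2 0 1 3))))).or
    (Fml.ex 1 (.all 2 ((Fml.mem (.var 2) 0).imp
      ((Fml.lt (.var 1) (.var 2)).imp (.not (sliceF 2 0 1 3))))))),
    0, fun _ => S.zero, fun _ => A, fun _ => hA, fun Y => by
      simp [DecidesSlices, AlmostSubset, Sat, sat_sliceF, PTerm.val]⟩

theorem setOf_almostSubset_slice_mem (hACA : SatACA0 S 𝔛) (hA : A ∈ 𝔛) {Y : Set M}
    (hY : Y ∈ 𝔛) : {a | S.AlmostSubset Y (S.SliceAt A a)} ∈ 𝔛 :=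
  hACA.mem_of_iff_sat (φ := Fml.ex 1 (.all 2 ((Fml.mem (.var 2) 1).imp
      ((Fml.lt (.var 1) (.var 2)).imp (sliceF 2 0 0 3)))))
    (by simp [Fml.IsArith]) 0 (fun _ => S.zero)
    (w := fun i => if i = 0 then A else Y) (fun i => by split_ifs; exacts [hA, hY])
    fun a => by simp [AlmostSubset, Sat, sat_sliceF, PTerm.val]

end AStr

theorem definableFam_of_isGeneric (hACA : SatACA0 S 𝔛) (hU : IsFilterOn (S.PX 𝔛) U)
    (hGen : S.IsGeneric 𝔛 U) : S.DefinableFam 𝔛 U := by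
  intro A hA
  obtain ⟨Y, hYU, hYA⟩ := hGen.exists_mem (AStr.definableProp_decidesSlices hA) fun X hX =>
    ⟨S.greedySubset A X, AStr.greedySubset_mem_PX hACA hA hX, AStr.greedySubset_subset,
      AStr.greedySubset_decidesSlices hACA hA hX⟩
  have hY := hU.1 hYU
  suffices {a | S.SliceAt A a ∈ U} = {a | S.AlmostSubset Y (S.SliceAt A a)} from
    this ▸ AStr.setOf_almostSubset_slice_mem hACA hA hY.1
  ext a
  refine ⟨fun haU => (hYA a).resolve_right fun ⟨b, hb⟩ => ?_, fun hYa =>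
    mem_of_almostSubset hACA hU hGen hYU ⟨hACA.slice_mem hA a, hYa.unb hACA.1 hY.2⟩ hYa⟩
  obtain ⟨x, ⟨hxY, hxA⟩, hbx⟩ := hU.exists_mem_inter_gt hYU haU b
  exact hb x hxY hbx hxA

end Greedy

/-- If `(M,𝔛) ⊨ ACA₀` and `U` is a generic ultrafilter on `P_𝔛`
(meeting every dense subset of `P_𝔛` that is parameter-definable in `(M,𝔛)`),
then `U` is complete and definable. -/
theorem generic_ultrafilter_complete_definable
    {M : Type} (S : AStr M) (𝔛 U : Set (Set M))
    (hACA : SatACA0 S 𝔛)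
    (hUltra : IsUltraOn (S.PX 𝔛) U)
    (hGen : ∀ D : Set (Set M), D ⊆ S.PX 𝔛 →
      (∀ X ∈ S.PX 𝔛, ∃ Y ∈ D, Y ⊆ X) →
      (∃ (φ : Fml) (k : ℕ) (v : ℕ → M) (w : ℕ → Set M), (∀ i, w i ∈ 𝔛) ∧
        D = {X | X ∈ S.PX 𝔛 ∧ Sat S 𝔛 v (Function.update w k X) φ}) →
      (U ∩ D).Nonempty) :
    S.CompleteOn 𝔛 U ∧ S.DefinableFam 𝔛 U :=
  ⟨completeOn_of_isGeneric hACA hGen, definableFam_of_isGeneric hACA hUltra.1 hGen⟩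

end Paper
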